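/- Let T > 0 and let δ, ξ, b : [0,T] → ℝ³ and V, ω : [0,T] → ℝ be continuous, with δ continuously differentiable, |b(t)| ≤ 1 for all t, and δ̇(t) = ξ(t) − V(t) b(t) − ω(t) δ(t)^⊥ on [0,T]. Then for every t ∈ [0,T], |δ(t)| ≤ T^{−1/2} (∫₀ᵀ |δ|²)^{1/2} + (∫₀ᵀ ω²)^{1/2} (∫₀ᵀ |δ|²)^{1/2} + T^{1/2} (∫₀ᵀ |ξ|²)^{1/2} + T^{1/2} (∫₀ᵀ V²)^{1/2}. -/

import Mathlib

open Matrix intervalIntegral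

/-- The Euclidean norm on `ℝ³`. -/
noncomputable def norm3 (v : Fin 3 → ℝ) : ℝ := Real.sqrt (v ⬝ᵥ v)

/-- For `a = (a₁,a₂,a₃) ∈ ℝ³`, `a^⊥ := e₁ × a = (0, -a₃, a₂)`. -/
def perp (a : Fin 3 → ℝ) : Fin 3 → ℝ := ![0, -a 2, a 1]

/-!
By the fundamental theorem of calculus, `|δ(t)| ≤ |δ(s)| + ∫₀ᵀ |δ̇|` for all `s, t ∈ [0,T]`;
averaging over `s` gives `|δ(t)| ≤ T⁻¹ ∫₀ᵀ |δ| + ∫₀ᵀ |δ̇|`. The equation bounds `|δ̇|` pointwise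
by `|ξ| + |V| + |ω| |δ|`, since `|b| ≤ 1` and `a ↦ a^⊥` does not increase the norm, and the
Cauchy–Schwarz inequality turns each of the resulting `L¹` norms into the `L²` norms of the claim.
-/

open MeasureTheory Set

section FundamentalTheorem

variable {E : Type*} [NormedAddCommGroup E] [NormedSpace ℝ E] [CompleteSpace E]
  {f f' : ℝ → E} {a b : ℝ}

theorem norm_sub_le_integral_norm_deriv_of_mem_Icc
    (hf : ∀ x ∈ Icc a b, HasDerivWithinAt f (f' x) (Icc a b) x)
    (hf' : ContinuousOn f' (Icc a b)) {s t : ℝ} (hs : s ∈ Icc a b) (ht : t ∈ Icc a b) :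
    ‖f t - f s‖ ≤ ∫ x in a..b, ‖f' x‖ := by
  have hab : a ≤ b := hs.1.trans hs.2
  have hst : uIcc s t ⊆ Icc a b := uIcc_subset_Icc hs ht
  have hftc : ∫ x in s..t, f' x = f t - f s := by
    refine integral_eq_sub_of_hasDeriv_right
      (fun x hx => (hf x (hst hx)).continuousWithinAt.mono hst) (fun x hx => ?_)
      (hf'.mono hst).intervalIntegrable
    have hx' : x ∈ Ioo a b :=
      ⟨(le_min hs.1 ht.1).trans_lt hx.1, hx.2.trans_le (max_le hs.2 ht.2)⟩
    exact ((hf x (Ioo_subset_Icc_self hx')).hasDerivAt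
      (Icc_mem_nhds hx'.1 hx'.2)).hasDerivWithinAt
  have hst' : uIoc s t ⊆ uIoc a b :=
    uIoc_subset_uIoc_of_uIcc_subset_uIcc (by rwa [uIcc_of_le hab])
  rw [← hftc]
  calc ‖∫ x in s..t, f' x‖ ≤ |∫ x in s..t, ‖f' x‖| := norm_integral_le_abs_integral_norm
    _ ≤ |∫ x in a..b, ‖f' x‖| :=
      abs_integral_mono_interval hst' (Filter.Eventually.of_forall fun _ => norm_nonneg _)
        (hf'.norm.intervalIntegrable_of_Icc hab)
    _ = ∫ x in a..b, ‖f' x‖ := abs_of_nonneg (integral_nonneg hab fun _ _ => norm_nonneg _)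

theorem norm_le_integral_norm_div_add_integral_norm_deriv (hab : a < b)
    (hf : ∀ x ∈ Icc a b, HasDerivWithinAt f (f' x) (Icc a b) x)
    (hf' : ContinuousOn f' (Icc a b)) {t : ℝ} (ht : t ∈ Icc a b) :
    ‖f t‖ ≤ (∫ s in a..b, ‖f s‖) / (b - a) + ∫ x in a..b, ‖f' x‖ := by
  have hfc : ContinuousOn f (Icc a b) := fun x hx => (hf x hx).continuousWithinAt
  have hpt : ∀ s ∈ Icc a b, ‖f t‖ ≤ ‖f s‖ + ∫ x in a..b, ‖f' x‖ := fun s hs =>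
    (norm_le_norm_add_norm_sub' (f t) (f s)).trans
      (add_le_add_right (norm_sub_le_integral_norm_deriv_of_mem_Icc hf hf' hs ht) _)
  have hfi : IntervalIntegrable (fun s => ‖f s‖) volume a b :=
    hfc.norm.intervalIntegrable_of_Icc hab.le
  have havg := integral_mono_on hab.le intervalIntegrable_const
    (hfi.add intervalIntegrable_const) hpt
  rw [intervalIntegral.integral_const, integral_add hfi intervalIntegrable_const,
    intervalIntegral.integral_const, smul_eq_mul, smul_eq_mul] at havg
  rw [div_add' _ _ _ (sub_pos.2 hab).ne', le_div_iff₀ (sub_pos.2 hab)]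
  linarith

end FundamentalTheorem

section CauchySchwarz

variable {f g : ℝ → ℝ} {a b : ℝ}

theorem integral_mul_le_sqrt_integral_sq_mul_sqrt_integral_sq (hab : a ≤ b)
    (hf : ContinuousOn f (Icc a b)) (hg : ContinuousOn g (Icc a b))
    (hf0 : ∀ x, 0 ≤ f x) (hg0 : ∀ x, 0 ≤ g x) :
    ∫ x in a..b, f x * g x ≤ √(∫ x in a..b, f x ^ 2) * √(∫ x in a..b, g x ^ 2) := by
  have hL2 : ∀ {h : ℝ → ℝ}, ContinuousOn h (Icc a b) →
      MemLp h (ENNReal.ofReal 2) (volume.restrict (Ioc a b)) := fun {h} hh => by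
    rw [ENNReal.ofReal_ofNat, memLp_two_iff_integrable_sq
      ((hh.mono Ioc_subset_Icc_self).aestronglyMeasurable measurableSet_Ioc)]
    exact (hh.pow 2).integrableOn_Icc.mono_set Ioc_subset_Icc_self
  have holder := integral_mul_le_Lp_mul_Lq_of_nonneg Real.HolderConjugate.two_two
    (ae_of_all _ hf0) (ae_of_all _ hg0) (hL2 hf) (hL2 hg)
  simp only [Real.rpow_two, ← Real.sqrt_eq_rpow] at holder
  simpa only [integral_of_le hab] using holder

theorem integral_le_sqrt_mul_sqrt_integral_sq (hab : a ≤ b) (hf : ContinuousOn f (Icc a b))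
    (hf0 : ∀ x, 0 ≤ f x) :
    ∫ x in a..b, f x ≤ √(b - a) * √(∫ x in a..b, f x ^ 2) := by
  simpa using integral_mul_le_sqrt_integral_sq_mul_sqrt_integral_sq hab continuousOn_const hf
    (fun _ => zero_le_one) hf0

theorem integral_div_le_sqrt_integral_sq_div_sqrt (hab : a < b) (hf : ContinuousOn f (Icc a b))
    (hf0 : ∀ x, 0 ≤ f x) :
    (∫ x in a..b, f x) / (b - a) ≤ √(∫ x in a..b, f x ^ 2) / √(b - a) := by
  have hba : 0 < b - a := sub_pos.2 hab
  calc (∫ x in a..b, f x) / (b - a) ≤ √(b - a) * √(∫ x in a..b, f x ^ 2) / (b - a) := by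
        gcongr
        exact integral_le_sqrt_mul_sqrt_integral_sq hab.le hf hf0
    _ = √(∫ x in a..b, f x ^ 2) / √(b - a) := by
        rw [div_eq_div_iff hba.ne' (Real.sqrt_pos.2 hba).ne', mul_right_comm,
          Real.mul_self_sqrt hba.le, mul_comm]

end CauchySchwarz

theorem norm3_eq_norm (v : Fin 3 → ℝ) : norm3 v = ‖(EuclideanSpace.equiv (Fin 3) ℝ).symm v‖ := by
  simp [norm3, EuclideanSpace.norm_eq, dotProduct, sq]

theorem norm3_sub_le (x y : Fin 3 → ℝ) : norm3 (x - y) ≤ norm3 x + norm3 y := by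
  simpa only [norm3_eq_norm, map_sub] using norm_sub_le _ _

theorem norm3_smul (c : ℝ) (x : Fin 3 → ℝ) : norm3 (c • x) = |c| * norm3 x := by
  simp only [norm3_eq_norm, map_smul, norm_smul, Real.norm_eq_abs]

theorem norm3_nonneg (v : Fin 3 → ℝ) : 0 ≤ norm3 v := Real.sqrt_nonneg _

theorem continuous_norm3 : Continuous norm3 := by
  simp_rw [funext norm3_eq_norm]
  fun_prop

theorem ContinuousOn.norm3 {α : Type*} [TopologicalSpace α] {f : α → Fin 3 → ℝ} {s : Set α}
    (hf : ContinuousOn f s) : ContinuousOn (fun x => norm3 (f x)) s :=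
  continuous_norm3.comp_continuousOn hf

theorem norm3_perp_le (a : Fin 3 → ℝ) : norm3 (perp a) ≤ norm3 a := by
  refine Real.sqrt_le_sqrt ?_
  simp only [dotProduct, Fin.sum_univ_three, perp, cons_val_zero, cons_val_one, cons_val_two,
    head_cons, tail_cons]
  nlinarith [sq_nonneg (a 0)]

theorem norm3_sub_smul_sub_smul_perp_le (x y d : Fin 3 → ℝ) (v w : ℝ) (hy : norm3 y ≤ 1) :
    norm3 (x - v • y - w • perp d) ≤ norm3 x + |v| + |w| * norm3 d := by
  calc norm3 (x - v • y - w • perp d) ≤ norm3 x + |v| * norm3 y + |w| * norm3 (perp d) := by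
        simpa only [norm3_smul] using
          (norm3_sub_le _ (w • perp d)).trans (add_le_add_left (norm3_sub_le x (v • y)) _)
    _ ≤ norm3 x + |v| + |w| * norm3 d := by
        gcongr
        · exact mul_le_of_le_one_right (abs_nonneg v) hy
        · exact norm3_perp_le d

theorem integral_norm3_le_of_eq_sub_smul_sub_smul_perp {a b : ℝ} (hab : a ≤ b)
    {y ξ β δ : ℝ → Fin 3 → ℝ} {V ω : ℝ → ℝ} (hy : ContinuousOn y (Icc a b))
    (hξ : ContinuousOn ξ (Icc a b)) (hV : ContinuousOn V (Icc a b))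
    (hω : ContinuousOn ω (Icc a b)) (hδ : ContinuousOn δ (Icc a b))
    (hβ : ∀ u ∈ Icc a b, norm3 (β u) ≤ 1)
    (hy_eq : ∀ u ∈ Icc a b, y u = ξ u - V u • β u - ω u • perp (δ u)) :
    ∫ u in a..b, norm3 (y u) ≤ (∫ u in a..b, norm3 (ξ u)) + (∫ u in a..b, |V u|)
      + ∫ u in a..b, |ω u| * norm3 (δ u) := by
  have hint : ∀ {h : ℝ → ℝ}, ContinuousOn h (Icc a b) → IntervalIntegrable h volume a b :=
    fun hh => hh.intervalIntegrable_of_Icc hab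
  have hξ' := hξ.norm3
  have hδ' := hδ.norm3
  rw [← integral_add (hint hξ') (hint hV.abs),
    ← integral_add (f := fun u => norm3 (ξ u) + |V u|) (g := fun u => |ω u| * norm3 (δ u))
      (hint (hξ'.add hV.abs)) (hint (hω.abs.mul hδ'))]
  refine integral_mono_on hab (hint hy.norm3)
    (hint ((hξ'.add hV.abs).add (hω.abs.mul hδ'))) fun u hu => ?_
  rw [hy_eq u hu]
  exact norm3_sub_smul_sub_smul_perp_le _ _ _ _ _ (hβ u hu)

theorem stmt16_general (T : ℝ) (hT : 0 < T) (δ δ' ξ b : ℝ → Fin 3 → ℝ) (V ω : ℝ → ℝ)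
    (hξ : ContinuousOn ξ (Set.Icc 0 T))
    (hV : ContinuousOn V (Set.Icc 0 T)) (hω : ContinuousOn ω (Set.Icc 0 T))
    (hderiv : ∀ t ∈ Set.Icc 0 T, HasDerivWithinAt δ (δ' t) (Set.Icc 0 T) t)
    (hδ'cont : ContinuousOn δ' (Set.Icc 0 T))
    (hbnorm : ∀ t ∈ Set.Icc 0 T, norm3 (b t) ≤ 1)
    (heq : ∀ t ∈ Set.Icc 0 T, δ' t = ξ t - V t • b t - ω t • perp (δ t)) :
    ∀ t ∈ Set.Icc 0 T,
      norm3 (δ t)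
        ≤ Real.sqrt (∫ t in (0:ℝ)..T, norm3 (δ t) ^ 2) / Real.sqrt T
          + Real.sqrt (∫ t in (0:ℝ)..T, (ω t) ^ 2)
              * Real.sqrt (∫ t in (0:ℝ)..T, norm3 (δ t) ^ 2)
          + Real.sqrt T * Real.sqrt (∫ t in (0:ℝ)..T, norm3 (ξ t) ^ 2)
          + Real.sqrt T * Real.sqrt (∫ t in (0:ℝ)..T, (V t) ^ 2) := by
  intro t ht
  let L := (EuclideanSpace.equiv (Fin 3) ℝ).symm
  have hL : ∀ v, ‖L v‖ = norm3 v := fun v => (norm3_eq_norm v).symm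
  have hδ : ContinuousOn δ (Icc 0 T) := fun u hu => (hderiv u hu).continuousWithinAt
  have hnδ := hδ.norm3
  have hftc := norm_le_integral_norm_div_add_integral_norm_deriv (f := fun u => L (δ u)) hT
    (fun u hu => L.hasFDerivAt.comp_hasDerivWithinAt u (hderiv u hu))
    (L.continuous.comp_continuousOn hδ'cont) ht
  simp only [ContinuousLinearEquiv.coe_coe, hL, sub_zero] at hftc
  have hδ' := integral_norm3_le_of_eq_sub_smul_sub_smul_perp hT.le hδ'cont hξ hV hω hδ hbnorm heq
  have csδ := integral_div_le_sqrt_integral_sq_div_sqrt hT hnδ fun u => norm3_nonneg (δ u)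
  have csξ := integral_le_sqrt_mul_sqrt_integral_sq hT.le hξ.norm3 fun u => norm3_nonneg (ξ u)
  have csV := integral_le_sqrt_mul_sqrt_integral_sq hT.le hV.abs fun u => abs_nonneg (V u)
  have csωδ := integral_mul_le_sqrt_integral_sq_mul_sqrt_integral_sq hT.le hω.abs hnδ
    (fun u => abs_nonneg (ω u)) fun u => norm3_nonneg (δ u)
  simp only [sub_zero, sq_abs] at csδ csξ csV csωδ
  linarith

/-- Let `T > 0` and let `δ, ξ, b : [0,T] → ℝ³`, `V, ω : [0,T] → ℝ` be continuous,
with `δ` continuously differentiable (derivative `δ'`), `|b(t)| ≤ 1`, and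
`δ̇(t) = ξ(t) − V(t) b(t) − ω(t) δ(t)^⊥` on `[0,T]`. Then for every `t ∈ [0,T]`,
`|δ(t)| ≤ T^{−1/2}(∫₀ᵀ|δ|²)^{1/2} + (∫₀ᵀ ω²)^{1/2}(∫₀ᵀ|δ|²)^{1/2}
 + T^{1/2}(∫₀ᵀ|ξ|²)^{1/2} + T^{1/2}(∫₀ᵀ V²)^{1/2}`. -/
theorem stmt16 (T : ℝ) (hT : 0 < T) (δ δ' ξ b : ℝ → Fin 3 → ℝ) (V ω : ℝ → ℝ)
    (hξ : ContinuousOn ξ (Set.Icc 0 T)) (hb : ContinuousOn b (Set.Icc 0 T))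
    (hV : ContinuousOn V (Set.Icc 0 T)) (hω : ContinuousOn ω (Set.Icc 0 T))
    (hderiv : ∀ t ∈ Set.Icc 0 T, HasDerivWithinAt δ (δ' t) (Set.Icc 0 T) t)
    (hδ'cont : ContinuousOn δ' (Set.Icc 0 T))
    (hbnorm : ∀ t ∈ Set.Icc 0 T, norm3 (b t) ≤ 1)
    (heq : ∀ t ∈ Set.Icc 0 T, δ' t = ξ t - V t • b t - ω t • perp (δ t)) :
    ∀ t ∈ Set.Icc 0 T,
      norm3 (δ t)
        ≤ Real.sqrt (∫ t in (0:ℝ)..T, norm3 (δ t) ^ 2) / Real.sqrt T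
          + Real.sqrt (∫ t in (0:ℝ)..T, (ω t) ^ 2)
              * Real.sqrt (∫ t in (0:ℝ)..T, norm3 (δ t) ^ 2)
          + Real.sqrt T * Real.sqrt (∫ t in (0:ℝ)..T, norm3 (ξ t) ^ 2)
          + Real.sqrt T * Real.sqrt (∫ t in (0:ℝ)..T, (V t) ^ 2) :=
  stmt16_general T hT δ δ' ξ b V ω hξ hV hω hderiv hδ'cont hbnorm heq
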